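/- arXiv:2505.04117 — 3 statements merged into one kernel-verified Lean document; each statement's English description precedes it below -/
import Mathlib

section
/- Let (G_n, f_n) be an inverse sequence of countable abelian groups indexed by ℕ, define G_n° = ⋂_{m ≥ n} Im(f_{n,m} : G_m → G_n), and consider the induced inverse sequence of quotient groups (G_n / G_n°). Then the inverse limit lim (G_n / G_n°) is the zero group: every coherent sequence of cosets (x_n + G_n°) with x_n + G_n° = f_n(x_{n+1}) + G_n° for all n satisfies x_n ∈ G_n° for all n. -/
/-!
Telescoping: `x n - f_{n,m} (x m)` is the sum of the images `f_{n,k} (x k - f k (x (k+1)))` for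
`n ≤ k < m`, and each lies in `G_n°` because `f_{n,k}` maps `G_k°` into `G_n°`. Since
`G_n° ⊆ Im f_{n,m}`, it follows that `x n ∈ Im f_{n,m}` for every `m ≥ n`, i.e. `x n ∈ G_n°`.
-/

/-- The composite bonding map `f_{n,m} : G m →+ G n` for `n ≤ m`, namely
`f n ∘ f (n+1) ∘ ⋯ ∘ f (m-1)` (with `f_{n,n} = id`). -/
def fnm (G : ℕ → Type*) [∀ n, AddCommGroup (G n)] (f : ∀ n, G (n + 1) →+ G n)
    (n m : ℕ) (h : n ≤ m) : G m →+ G n :=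
  Nat.leRecOn h (fun {k} (g : G k →+ G n) => g.comp (f k)) (AddMonoidHom.id (G n))

/-- `G_n° = ⋂_{m ≥ n} Im (f_{n,m} : G m →+ G n)`, as an `AddSubgroup` of `G n`. -/
def Gcirc (G : ℕ → Type*) [∀ n, AddCommGroup (G n)] (f : ∀ n, G (n + 1) →+ G n)
    (n : ℕ) : AddSubgroup (G n) :=
  ⨅ (m : ℕ) (h : n ≤ m), (fnm G f n m h).range

section InverseSequence

variable {G : ℕ → Type*} [∀ n, AddCommGroup (G n)] {f : ∀ n, G (n + 1) →+ G n}

theorem fnm_self (n : ℕ) : fnm G f n n le_rfl = AddMonoidHom.id (G n) :=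
  Nat.leRecOn_self _

theorem fnm_succ {n m : ℕ} (h : n ≤ m) :
    fnm G f n (m + 1) (h.trans m.le_succ) = (fnm G f n m h).comp (f m) :=
  Nat.leRecOn_succ h _

theorem fnm_comp_fnm {n m k : ℕ} (hnm : n ≤ m) (hmk : m ≤ k) :
    (fnm G f n m hnm).comp (fnm G f m k hmk) = fnm G f n k (hnm.trans hmk) := by
  induction k, hmk using Nat.le_induction with
  | base => rw [fnm_self]; rfl
  | succ k hmk ih =>
    rw [fnm_succ hmk, fnm_succ (hnm.trans hmk), ← AddMonoidHom.comp_assoc, ih]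

theorem mem_Gcirc_iff {n : ℕ} {g : G n} :
    g ∈ Gcirc G f n ↔ ∀ m (h : n ≤ m), g ∈ (fnm G f n m h).range := by
  simp only [Gcirc, AddSubgroup.mem_iInf]

theorem Gcirc_le_range {n m : ℕ} (h : n ≤ m) : Gcirc G f n ≤ (fnm G f n m h).range :=
  fun _ hg => mem_Gcirc_iff.1 hg m h

theorem fnm_mem_Gcirc {n m : ℕ} (h : n ≤ m) {g : G m} (hg : g ∈ Gcirc G f m) :
    fnm G f n m h g ∈ Gcirc G f n := by
  refine mem_Gcirc_iff.2 fun k hnk => ?_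
  rcases le_total k m with hkm | hmk
  · exact ⟨fnm G f k m hkm g, by rw [← AddMonoidHom.comp_apply, fnm_comp_fnm]⟩
  · obtain ⟨g', rfl⟩ := mem_Gcirc_iff.1 hg k hmk
    exact ⟨g', by rw [← AddMonoidHom.comp_apply, fnm_comp_fnm]⟩

theorem sub_fnm_mem_Gcirc {x : ∀ n, G n} (hx : ∀ n, x n - f n (x (n + 1)) ∈ Gcirc G f n)
    {n m : ℕ} (h : n ≤ m) : x n - fnm G f n m h (x m) ∈ Gcirc G f n := by
  induction m, h using Nat.le_induction with
  | base => simp [fnm_self]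
  | succ m hnm ih =>
    have telescope : x n - fnm G f n (m + 1) (hnm.trans m.le_succ) (x (m + 1)) =
        (x n - fnm G f n m hnm (x m)) + fnm G f n m hnm (x m - f m (x (m + 1))) := by
      rw [fnm_succ hnm, map_sub, AddMonoidHom.comp_apply]
      abel
    rw [telescope]
    exact add_mem ih (fnm_mem_Gcirc hnm (hx m))

end InverseSequence

theorem invLim_quotient_Gcirc_eq_zero_general
    (G : ℕ → Type*) [∀ n, AddCommGroup (G n)]
    (f : ∀ n, G (n + 1) →+ G n) :
    ∀ x : ∀ n, G n, (∀ n, x n - f n (x (n + 1)) ∈ Gcirc G f n) →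
      ∀ n, x n ∈ Gcirc G f n := by
  intro x hx n
  refine mem_Gcirc_iff.2 fun m h => ?_
  have hrange : fnm G f n m h (x m) ∈ (fnm G f n m h).range := ⟨x m, rfl⟩
  have hsub := Gcirc_le_range h (sub_fnm_mem_Gcirc hx h)
  simpa using add_mem hrange hsub

/-- Let `(G n, f n)` be an inverse sequence of countable abelian groups indexed
by `ℕ`, define `G_n° = ⋂_{m ≥ n} Im (f_{n,m} : G m →+ G n)`, and consider the induced inverse
sequence of quotient groups `(G n ⧸ G_n°)`.  Then the inverse limit `lim (G n ⧸ G_n°)` is the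
zero group: every coherent sequence of cosets `(x n + G_n°)`, i.e. with
`x n + G_n° = f n (x (n+1)) + G_n°` (equivalently `x n - f n (x (n+1)) ∈ G_n°`) for all `n`,
satisfies `x n ∈ G_n°` for all `n`. -/
theorem invLim_quotient_Gcirc_eq_zero
    (G : ℕ → Type*) [∀ n, AddCommGroup (G n)] [∀ n, Countable (G n)]
    (f : ∀ n, G (n + 1) →+ G n) :
    ∀ x : ∀ n, G n, (∀ n, x n - f n (x (n + 1)) ∈ Gcirc G f n) →
      ∀ n, x n ∈ Gcirc G f n :=
  invLim_quotient_Gcirc_eq_zero_general G f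
end

section
/- Let (G_n, f_n) be an inverse sequence of countable discrete abelian groups indexed by ℕ with all bonding maps f_n : G_{n+1} → G_n surjective, and suppose the set {n : ker(f_n) is infinite} is infinite. Then the inverse limit lim G_n is not locally compact, and it is homeomorphic to the Baire space ℕ → ℕ with the product topology. -/
/-- The inverse limit of an inverse sequence of abelian groups `(G n, f n)`, as the
`AddSubgroup` of coherent sequences in the product group `∀ n, G n`.  Each `G n` is viewed
as a discrete topological group, and `invLim G f` carries the subspace topology from the
product topology. -/
def invLim (G : ℕ → Type*) [∀ n, AddCommGroup (G n)]
    (f : ∀ n, G (n + 1) →+ G n) : AddSubgroup (∀ n, G n) where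
  carrier := {x | ∀ n, x n = f n (x (n + 1))}
  add_mem' := by
    intro a b ha hb n
    show a n + b n = f n (a (n + 1) + b (n + 1))
    rw [map_add, ← ha n, ← hb n]
  zero_mem' := by
    intro n
    show (0 : G n) = f n 0
    rw [map_zero]
  neg_mem' := by
    intro a ha n
    show -(a n) = f n (-(a (n + 1)))
    rw [map_neg, ← ha n]


noncomputable section InvLimAux

open Function

/-- Any equiv between discrete spaces is a homeomorphism. -/
def discreteHomeomorph {α β : Type*} [TopologicalSpace α] [TopologicalSpace β]
    [DiscreteTopology α] [DiscreteTopology β] (e : α ≃ β) : α ≃ₜ β where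
  toEquiv := e
  continuous_toFun := continuous_of_discreteTopology
  continuous_invFun := continuous_of_discreteTopology

/-- A product of pairs is a pair of products. -/
def piProdHomeomorph {ι : Type*} (A B : ι → Type*) [∀ i, TopologicalSpace (A i)]
    [∀ i, TopologicalSpace (B i)] :
    (∀ i, A i × B i) ≃ₜ (∀ i, A i) × (∀ i, B i) where
  toFun v := (fun i => (v i).1, fun i => (v i).2)
  invFun p i := (p.1 i, p.2 i)
  left_inv v := rfl
  right_inv p := rfl
  continuous_toFun := by
    refine Continuous.prodMk ?_ ?_ <;> exact continuous_pi fun i => by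
      first
        | exact (continuous_apply i).fst
        | exact (continuous_apply i).snd
  continuous_invFun := continuous_pi fun i =>
    ((continuous_apply i).comp continuous_fst).prodMk ((continuous_apply i).comp continuous_snd)

/-- A countable product of nonempty countable discrete spaces with infinitely many infinite
factors is homeomorphic to the Baire space. -/
theorem pi_homeomorph_baire (D : ℕ → Type*) [∀ n, TopologicalSpace (D n)]
    [∀ n, DiscreteTopology (D n)] [∀ n, Countable (D n)] [∀ n, Nonempty (D n)]
    (hinf : {n | Infinite (D n)}.Infinite) :
    Nonempty ((∀ n, D n) ≃ₜ (ℕ → ℕ)) := by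
  classical
  -- (∏ D) × Baire ≃ₜ Baire
  have star : (∀ n, D n) × (ℕ → ℕ) ≃ₜ (ℕ → ℕ) := by
    refine ((piProdHomeomorph D fun _ => ℕ).symm.trans ?_)
    refine Homeomorph.piCongrRight fun n => discreteHomeomorph ?_
    exact (nonempty_equiv_of_countable (α := D n × ℕ) (β := ℕ)).some
  set S : Set ℕ := {n | Infinite (D n)} with hS
  -- the S-indexed part is homeomorphic to Baire space
  haveI : Infinite ↥S := hinf.to_subtype
  have eS : ↥S ≃ ℕ := (nonempty_equiv_of_countable (α := ↥S) (β := ℕ)).some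
  have e2 : (∀ i : ↥S, D i) ≃ₜ (↥S → ℕ) := by
    refine Homeomorph.piCongrRight fun i => discreteHomeomorph ?_
    haveI : Infinite (D i) := i.2
    exact (nonempty_equiv_of_countable (α := D i) (β := ℕ)).some
  have e3 : (↥S → ℕ) ≃ₜ (ℕ → ℕ) := Homeomorph.piCongrLeft (Y := fun _ : ℕ => ℕ) eS
  have eBaire2 : (ℕ → ℕ) ≃ₜ (ℕ → ℕ) × (ℕ → ℕ) :=
    (Homeomorph.piCongrRight fun _ : ℕ =>
      discreteHomeomorph (Denumerable.eqv (ℕ × ℕ)).symm).trans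
      (piProdHomeomorph (fun _ : ℕ => ℕ) (fun _ : ℕ => ℕ))
  have e1 : (∀ n, D n) ≃ₜ (∀ i : ↥S, D i) × (∀ i : {n // n ∉ S}, D i) := by
    exact Homeomorph.piEquivPiSubtypeProd (fun n => n ∈ S) D
  -- ∏ D ≃ₜ (∏ D) × Baire
  have dup : (∀ n, D n) ≃ₜ (∀ n, D n) × (ℕ → ℕ) :=
    e1.trans <| (Homeomorph.prodCongr ((e2.trans e3).trans eBaire2) (Homeomorph.refl _)).trans <|
      (Homeomorph.prodAssoc _ _ _).trans <|
      (Homeomorph.prodCongr (Homeomorph.refl _) (Homeomorph.prodComm _ _)).trans <|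
      ((Homeomorph.prodAssoc _ _ _).symm).trans <|
      (Homeomorph.prodCongr ((Homeomorph.prodCongr (e2.trans e3).symm
        (Homeomorph.refl _)).trans e1.symm) (Homeomorph.refl _))
  exact ⟨dup.trans star⟩

/-- The Baire space is not locally compact. -/
theorem baire_not_locallyCompact : ¬ LocallyCompactSpace (ℕ → ℕ) := by
  intro h
  haveI := h
  obtain ⟨K, hK, -, hKc⟩ := local_compact_nhds (x := (fun _ => 0 : ℕ → ℕ)) (n := Set.univ) Filter.univ_mem
  rw [nhds_pi, Filter.mem_pi] at hK
  obtain ⟨I, hIf, t, ht, hts⟩ := hK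
  obtain ⟨n, hn⟩ := hIf.infinite_compl.nonempty
  have himg : Set.Infinite ((fun x : ℕ → ℕ => x n) '' K) := by
    refine Set.infinite_of_injective_forall_mem (f := fun m : ℕ => m) injective_id ?_
    intro m
    refine ⟨Function.update (fun _ => 0) n m, hts ?_, by simp⟩
    intro i hi
    have : i ≠ n := fun hin => hn (hin ▸ hi)
    simpa [Function.update_of_ne this] using mem_of_mem_nhds (ht i)
  exact himg <| (hKc.image (continuous_apply n)).finite_of_discrete

section InvLimDecomp

universe u
variable (G : ℕ → Type u) [∀ n, AddCommGroup (G n)] (f : ∀ n, G (n + 1) →+ G n)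

/-- The family `G 0, ker (f 0), ker (f 1), …`. -/
def kerFam : ℕ → Type u
  | 0 => G 0
  | (k + 1) => (f k).ker

instance [∀ n, TopologicalSpace (G n)] : ∀ n, TopologicalSpace (kerFam G f n)
  | 0 => inferInstanceAs (TopologicalSpace (G 0))
  | (k + 1) => inferInstanceAs (TopologicalSpace (f k).ker)

instance [∀ n, TopologicalSpace (G n)] [∀ n, DiscreteTopology (G n)] :
    ∀ n, DiscreteTopology (kerFam G f n)
  | 0 => inferInstanceAs (DiscreteTopology (G 0))
  | (k + 1) => inferInstanceAs (DiscreteTopology (f k).ker)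

instance [∀ n, Countable (G n)] : ∀ n, Countable (kerFam G f n)
  | 0 => inferInstanceAs (Countable (G 0))
  | (k + 1) => inferInstanceAs (Countable (f k).ker)

instance : ∀ n, Nonempty (kerFam G f n)
  | 0 => inferInstanceAs (Nonempty (G 0))
  | (k + 1) => inferInstanceAs (Nonempty (f k).ker)

variable (hsurj : ∀ n, Function.Surjective (f n))

/-- A section of `f n`. -/
def sec (n : ℕ) : G n → G (n + 1) := Function.surjInv (hsurj n)

theorem sec_spec (n : ℕ) (g : G n) : f n (sec G f hsurj n g) = g :=
  Function.surjInv_eq (hsurj n) g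

/-- Reconstruct a coherent sequence from `kerFam` data. -/
def limSeq (v : ∀ n, kerFam G f n) : ∀ n, G n
  | 0 => v 0
  | (k + 1) => sec G f hsurj k (limSeq v k) + ((show ↥(f k).ker from v (k + 1)) : G (k + 1))

theorem limSeq_mem (v : ∀ n, kerFam G f n) (n : ℕ) :
    limSeq G f hsurj v n = f n (limSeq G f hsurj v (n + 1)) := by
  have hw : f n ((show ↥(f n).ker from v (n + 1)) : G (n + 1)) = 0 :=
    AddMonoidHom.mem_ker.mp (show ↥(f n).ker from v (n + 1)).2
  show limSeq G f hsurj v n =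
    f n (sec G f hsurj n (limSeq G f hsurj v n) + ((show ↥(f n).ker from v (n + 1)) : G (n + 1)))
  rw [map_add, sec_spec, hw, add_zero]

variable [∀ n, TopologicalSpace (G n)] [∀ n, DiscreteTopology (G n)]

theorem cont_limSeq : ∀ n, Continuous fun v : ∀ m, kerFam G f m => limSeq G f hsurj v n := by
  intro n
  induction n with
  | zero => exact continuous_apply 0
  | succ k ih =>
    have : (fun v : ∀ m, kerFam G f m => limSeq G f hsurj v (k + 1)) =
        (fun p : G k × ↥(f k).ker => sec G f hsurj k p.1 + (p.2 : G (k + 1))) ∘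
          (fun v => (limSeq G f hsurj v k, show ↥(f k).ker from v (k + 1))) := rfl
    rw [this]
    exact continuous_of_discreteTopology.comp (ih.prodMk (continuous_apply (k + 1)))

/-- The forward decomposition map. -/
def decompFun (x : invLim G f) : ∀ n, kerFam G f n
  | 0 => (x.1 0 : kerFam G f 0)
  | (k + 1) => (⟨x.1 (k + 1) - sec G f hsurj k (x.1 k), by
      rw [AddMonoidHom.mem_ker, map_sub, sec_spec, x.2 k, sub_self]⟩ : ↥(f k).ker)

theorem cont_decompFun : Continuous fun x : invLim G f => decompFun G f hsurj x := by
  refine continuous_pi fun n => ?_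
  match n with
  | 0 => exact (continuous_apply 0).comp continuous_subtype_val
  | (k + 1) =>
    refine Continuous.subtype_mk ?_ _
    have : (fun x : invLim G f => x.1 (k + 1) - sec G f hsurj k (x.1 k)) =
        (fun p : G (k + 1) × G k => p.1 - sec G f hsurj k p.2) ∘
          (fun x : invLim G f => (x.1 (k + 1), x.1 k)) := rfl
    rw [this]
    exact continuous_of_discreteTopology.comp
      (((continuous_apply (k + 1)).comp continuous_subtype_val).prodMk
        ((continuous_apply k).comp continuous_subtype_val))

/-- The decomposition homeomorphism. -/
def invLimHomeo : invLim G f ≃ₜ ∀ n, kerFam G f n where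
  toFun := decompFun G f hsurj
  invFun v := ⟨limSeq G f hsurj v, fun n => limSeq_mem G f hsurj v n⟩
  left_inv x := by
    ext n
    induction n with
    | zero => rfl
    | succ k ih =>
      show sec G f hsurj k _ + (x.1 (k + 1) - sec G f hsurj k (x.1 k)) = x.1 (k + 1)
      rw [show limSeq G f hsurj _ k = x.1 k from ih]
      abel
  right_inv v := by
    funext n
    match n with
    | 0 => rfl
    | (k + 1) =>
      refine Subtype.ext ?_
      show sec G f hsurj k (limSeq G f hsurj v k) +
          ((show ↥(f k).ker from v (k + 1)) : G (k + 1)) -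
          sec G f hsurj k (limSeq G f hsurj v k) = _
      abel
  continuous_toFun := cont_decompFun G f hsurj
  continuous_invFun :=
    Continuous.subtype_mk (continuous_pi fun n => cont_limSeq G f hsurj n) _

end InvLimDecomp

end InvLimAux

/-- Let `(G n, f n)` be an inverse sequence of countable discrete abelian
groups indexed by `ℕ` with all bonding maps `f n : G (n+1) → G n` surjective, and suppose the
set `{n : ker (f n) is infinite}` is infinite.  Then the inverse limit `lim G n` is not locally
compact, and it is homeomorphic to the Baire space `ℕ → ℕ` with the product topology. -/
theorem invLim_homeomorph_baire
    (G : ℕ → Type*) [∀ n, AddCommGroup (G n)] [∀ n, Countable (G n)]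
    [∀ n, TopologicalSpace (G n)] [∀ n, DiscreteTopology (G n)]
    (f : ∀ n, G (n + 1) →+ G n)
    (hsurj : ∀ n, Function.Surjective (f n))
    (hinf : {n : ℕ | Infinite (f n).ker}.Infinite) :
    ¬LocallyCompactSpace (invLim G f) ∧ Nonempty (invLim G f ≃ₜ (ℕ → ℕ)) := by
  have hK : {n : ℕ | Infinite (kerFam G f n)}.Infinite := by
    refine Set.Infinite.mono ?_ (hinf.image (Set.injOn_of_injective (add_left_injective 1)))
    rintro _ ⟨n, hn, rfl⟩
    exact hn
  obtain ⟨e⟩ := pi_homeomorph_baire (kerFam G f) hK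
  have homeo : invLim G f ≃ₜ (ℕ → ℕ) := (invLimHomeo G f hsurj).trans e
  exact ⟨fun h => baire_not_locallyCompact (homeo.locallyCompactSpace_iff.mp h), ⟨homeo⟩⟩
end

section
/- Let Λ be a directed set admitting a countable cofinal subset and let (G_α, f_{αβ}) be an inverse system of countable discrete abelian groups over Λ. Then the inverse limit lim G_α, with the subspace topology from the product of the discrete topologies, is homeomorphic to one of the following five spaces: a finite discrete space; ℕ with the discrete topology; the Cantor space ℕ → Bool; the product ℕ × (ℕ → Bool) of the discrete space ℕ with the Cantor space; or the Baire space ℕ → ℕ. -/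
/-!
Choose an increasing cofinal sequence `a 0 ≤ a 1 ≤ ⋯` in `Λ`. The points of the limit vanishing at
`a n` form a decreasing sequence of open subgroups with trivial intersection, and a set-theoretic
section of each successive quotient writes every point uniquely as a convergent sum of "digits".
This identifies the limit, as a space, with a countable product of countable discrete nonempty
spaces (the successive quotients).

Such a product is countable discrete if only finitely many factors are nontrivial. If infinitely
many factors are infinite, grouping the factors into finite blocks each containing an infinite one
turns it into the Baire space. Otherwise it is (countable discrete) × (a product of infinitely many
nontrivial finite spaces); grouping again, the second factor is a product of finite spaces with at
least two points each, which a unary prefix code identifies with the Cantor space.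
-/

/-- The inverse limit of an inverse system of abelian groups over a preorder `Λ`,
as the `AddSubgroup` of coherent tuples in the product group `∀ α, G α`. -/
def invLimSys {Λ : Type*} [Preorder Λ] (G : Λ → Type*) [∀ α, AddCommGroup (G α)]
    (f : ∀ ⦃α β : Λ⦄, α ≤ β → (G β →+ G α)) : AddSubgroup (∀ α, G α) where
  carrier := {x | ∀ ⦃α β : Λ⦄ (h : α ≤ β), x α = f h (x β)}
  add_mem' := by
    intro a b ha hb α β h
    show a α + b α = f h (a β + b β)
    rw [map_add, ← ha h, ← hb h]
  zero_mem' := by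
    intro α β h
    show (0 : G α) = f h 0
    rw [map_zero]
  neg_mem' := by
    intro a ha α β h
    show -(a α) = f h (-(a β))
    rw [map_neg, ← ha h]

open Filter

universe u

def consBit (b : Bool) (z : ℕ → Bool) : ℕ → Bool
  | 0 => b
  | n + 1 => z n

lemma consBit_head_tail (y : ℕ → Bool) : consBit (y 0) (fun n => y (n + 1)) = y :=
  funext fun n => by cases n <;> rfl

/-- The unary prefix code of `Fin (m + 1)` prepended to a bit stream: the symbol `i < m` is
written as `1ⁱ0`, the last symbol `m` as `1ᵐ`. -/
def unaryCons : (m : ℕ) → Fin (m + 1) → (ℕ → Bool) → ℕ → Bool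
  | 0, _, z => z
  | m + 1, i, z => Fin.cases (consBit false z) (fun j => consBit true (unaryCons m j z)) i

lemma continuous_consBit (b : Bool) : Continuous (consBit b) :=
  continuous_pi fun n => by cases n <;> [exact continuous_const; exact continuous_apply _]

lemma continuous_unaryCons : ∀ (m : ℕ) (i : Fin (m + 1)), Continuous (unaryCons m i)
  | 0, _ => continuous_id
  | m + 1, i => by
    induction i using Fin.cases with
    | zero => exact continuous_consBit false
    | succ j => exact (continuous_consBit true).comp (continuous_unaryCons m j)

lemma unaryCons_injective : ∀ m : ℕ, Function.Injective fun p : Fin (m + 1) × (ℕ → Bool) =>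
    unaryCons m p.1 p.2
  | 0, ⟨i, z⟩, ⟨i', z'⟩, h => Prod.ext (Subsingleton.elim (α := Fin 1) i i') h
  | m + 1, ⟨i, z⟩, ⟨i', z'⟩, h => by
    have head := congrFun h 0
    have tail := congrArg (fun y n => y (n + 1)) h
    induction i using Fin.cases with
    | zero =>
      induction i' using Fin.cases with
      | zero => exact Prod.ext rfl tail
      | succ => exact Bool.noConfusion head
    | succ j =>
      induction i' using Fin.cases with
      | zero => exact Bool.noConfusion head
      | succ j' =>
        obtain ⟨rfl, rfl⟩ :=
          Prod.ext_iff.1 (unaryCons_injective m (a₁ := (j, z)) (a₂ := (j', z')) tail)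
        rfl

lemma unaryCons_surjective : ∀ m : ℕ, Function.Surjective fun p : Fin (m + 1) × (ℕ → Bool) =>
    unaryCons m p.1 p.2
  | 0, y => ⟨(0, y), rfl⟩
  | m + 1, y => by
    rw [← consBit_head_tail y]
    cases y 0
    · exact ⟨(0, _), rfl⟩
    · obtain ⟨⟨j, z⟩, hz⟩ := unaryCons_surjective m fun n => y (n + 1)
      exact ⟨(j.succ, z), congrArg (consBit true) hz⟩

noncomputable def unaryConsHomeomorph (m : ℕ) : Fin (m + 1) × (ℕ → Bool) ≃ₜ (ℕ → Bool) :=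
  Continuous.homeoOfEquivCompactToT2
    (f := .ofBijective _ ⟨unaryCons_injective m, unaryCons_surjective m⟩)
    (continuous_prod_of_discrete_left.2 (continuous_unaryCons m))

/-- Every code word of `unaryCons (m + 1)` has at least one bit. -/
lemma unaryCons_succ_apply_congr : ∀ (m : ℕ) (i : Fin (m + 2)) {z z' : ℕ → Bool} {n : ℕ},
    (∀ j < n, z j = z' j) → unaryCons (m + 1) i z n = unaryCons (m + 1) i z' n
  | m, i, z, z', 0, _ => by induction i using Fin.cases <;> rfl
  | 0, i, z, z', n + 1, h => by induction i using Fin.cases <;> exact h n n.lt_succ_self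
  | m + 1, i, z, z', n + 1, h => by
    induction i using Fin.cases with
    | zero => exact h n n.lt_succ_self
    | succ j => exact unaryCons_succ_apply_congr m j fun k hk => h k (hk.trans n.lt_succ_self)

def decodeSeq : {X : ℕ → Type u} → (∀ k, (ℕ → Bool) → X k × (ℕ → Bool)) → (ℕ → Bool) → ∀ k, X k
  | _, d, y, 0 => (d 0 y).1
  | _, d, y, k + 1 => decodeSeq (fun k => d (k + 1)) (d 0 y).2 k

lemma continuous_decodeSeq {X : ℕ → Type u} [∀ k, TopologicalSpace (X k)]
    (d : ∀ k, (ℕ → Bool) → X k × (ℕ → Bool)) (hd : ∀ k, Continuous (d k)) :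
    Continuous (decodeSeq d) := by
  refine continuous_pi fun k => ?_
  induction k generalizing X with
  | zero => exact continuous_fst.comp (hd 0)
  | succ k ih => exact (ih _ fun k => hd (k + 1)).comp (continuous_snd.comp (hd 0))

lemma decodeSeq_injective {X : ℕ → Type u} (e : ∀ k, X k × (ℕ → Bool) ≃ (ℕ → Bool))
    (he : ∀ k x {z z' : ℕ → Bool} {n : ℕ}, (∀ j < n, z j = z' j) → e k (x, z) n = e k (x, z') n) :
    Function.Injective (decodeSeq fun k => (e k).symm) := by
  intro y y' h
  suffices ∀ n, ∀ j < n, y j = y' j from funext fun j => this (j + 1) j j.lt_succ_self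
  intro n
  induction n generalizing X y y' with
  | zero => exact fun j hj => absurd hj j.not_lt_zero
  | succ n ih =>
    obtain ⟨⟨x, z⟩, rfl⟩ := (e 0).surjective y
    obtain ⟨⟨x', z'⟩, rfl⟩ := (e 0).surjective y'
    have hx : x = x' := by simpa [decodeSeq] using congrFun h 0
    have hz : ∀ j < n, z j = z' j :=
      ih (fun k => e (k + 1)) (fun k => he (k + 1)) (y := z) (y' := z') <| funext fun k => by
        simpa [decodeSeq] using congrFun h (k + 1)
    intro j hj
    rw [hx, he 0 x' fun i hi => hz i (by omega)]

lemma exists_decodeSeq_eqOn {X : ℕ → Type u} (e : ∀ k, X k × (ℕ → Bool) ≃ (ℕ → Bool))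
    (x : ∀ k, X k) (n : ℕ) : ∃ y, ∀ k < n, decodeSeq (fun k => (e k).symm) y k = x k := by
  induction n generalizing X with
  | zero => exact ⟨fun _ => false, fun k hk => absurd hk k.not_lt_zero⟩
  | succ n ih =>
    obtain ⟨z, hz⟩ := ih (fun k => e (k + 1)) (fun k => x (k + 1))
    refine ⟨e 0 (x 0, z), fun k hk => ?_⟩
    cases k with
    | zero => simp [decodeSeq]
    | succ k => simpa [decodeSeq] using hz k (by omega)

theorem nonempty_homeomorph_pi_of_prefixCode {X : ℕ → Type u} [∀ k, TopologicalSpace (X k)]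
    [∀ k, DiscreteTopology (X k)] (e : ∀ k, X k × (ℕ → Bool) ≃ₜ (ℕ → Bool))
    (he : ∀ k x {z z' : ℕ → Bool} {n : ℕ}, (∀ j < n, z j = z' j) → e k (x, z) n = e k (x, z') n) :
    Nonempty ((ℕ → Bool) ≃ₜ ∀ k, X k) := by
  have hcont := continuous_decodeSeq _ fun k => (e k).symm.continuous
  -- the range is compact, and dense because every finite string of symbols is decoded from some
  -- bit stream
  have hsurj : Function.Surjective (decodeSeq fun k => (e k).symm) := by
    intro x
    choose y hy using exists_decodeSeq_eqOn (fun k => (e k).toEquiv) x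
    rw [← Set.mem_range, ← (isCompact_range hcont).isClosed.closure_eq]
    refine mem_closure_of_tendsto (b := atTop)
      (f := fun n => decodeSeq (fun k => (e k).symm) (y n)) ?_
      (Eventually.of_forall fun n => Set.mem_range_self _)
    refine tendsto_pi_nhds.2 fun k => tendsto_const_nhds.congr' ?_
    filter_upwards [eventually_gt_atTop k] with n hn using (hy n k hn).symm
  exact ⟨hcont.homeoOfEquivCompactToT2
    (f := .ofBijective _ ⟨decodeSeq_injective (fun k => (e k).toEquiv) he, hsurj⟩)⟩

theorem nonempty_homeomorph_pi_of_finite_nontrivial (X : ℕ → Type u)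
    [∀ k, TopologicalSpace (X k)] [∀ k, DiscreteTopology (X k)] [∀ k, Finite (X k)]
    [∀ k, Nontrivial (X k)] : Nonempty ((ℕ → Bool) ≃ₜ ∀ k, X k) := by
  have hcard (k : ℕ) : Nat.card (X k) = Nat.card (X k) - 2 + 1 + 1 := by
    have := Finite.one_lt_card_iff_nontrivial.2 (inferInstance : Nontrivial (X k))
    omega
  let σ (k : ℕ) : X k ≃ₜ Fin (Nat.card (X k) - 2 + 1 + 1) :=
    ((Finite.equivFin _).trans (finCongr (hcard k))).toHomeomorphOfDiscrete
  exact nonempty_homeomorph_pi_of_prefixCode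
    (fun k => ((σ k).prodCongr (.refl _)).trans (unaryConsHomeomorph _))
    fun k x _ _ _ h => unaryCons_succ_apply_congr _ _ h

def HasStandardModel (X : Type*) [TopologicalSpace X] : Prop :=
  (∃ (F : Type) (_ : TopologicalSpace F) (_ : DiscreteTopology F),
      Finite F ∧ Nonempty (X ≃ₜ F)) ∨
    Nonempty (X ≃ₜ ℕ) ∨ Nonempty (X ≃ₜ (ℕ → Bool)) ∨
    Nonempty (X ≃ₜ ℕ × (ℕ → Bool)) ∨ Nonempty (X ≃ₜ (ℕ → ℕ))

theorem HasStandardModel.of_homeomorph {X Y : Type*} [TopologicalSpace X] [TopologicalSpace Y]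
    (e : X ≃ₜ Y) (h : HasStandardModel Y) : HasStandardModel X :=
  have compose {Z : Type} [TopologicalSpace Z] : Nonempty (Y ≃ₜ Z) → Nonempty (X ≃ₜ Z) :=
    fun ⟨g⟩ => ⟨e.trans g⟩
  h.imp (fun ⟨F, _, hF, hfin, hg⟩ => ⟨F, _, hF, hfin, compose hg⟩) <|
    .imp compose <| .imp compose <| .imp compose compose

theorem hasStandardModel_of_discrete (X : Type*) [TopologicalSpace X] [DiscreteTopology X]
    [Countable X] : HasStandardModel X := by
  rcases finite_or_infinite X with hX | hX
  · exact .inl ⟨Fin (Nat.card X), _, inferInstance, inferInstance,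
      ⟨(Finite.equivFin X).toHomeomorphOfDiscrete⟩⟩
  · exact .inr <| .inl ⟨nonempty_equiv_of_countable.some.toHomeomorphOfDiscrete⟩

def piHomeomorphPiFiber {ι κ : Type*} (r : ι → κ) (X : ι → Type*) [∀ i, TopologicalSpace (X i)] :
    (∀ i, X i) ≃ₜ ∀ k, ∀ i : {i // r i = k}, X i where
  toFun x _ i := x i
  invFun y i := y (r i) ⟨i, rfl⟩
  left_inv _ := rfl
  right_inv y := by
    funext k ⟨i, hi⟩
    subst hi
    rfl
  continuous_toFun := continuous_pi fun _ => continuous_pi fun i => continuous_apply i.1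
  continuous_invFun := continuous_pi fun i => (continuous_apply _).comp (continuous_apply (r i))

theorem Set.Infinite.exists_retraction_finite_fiber {ι : Type*} [Countable ι] {A : Set ι}
    (hA : A.Infinite) : ∃ r : ι → A, (∀ a : A, r a = a) ∧ ∀ a, Finite {i // r i = a} := by
  obtain ⟨e, he⟩ := exists_injective_nat ι
  have hne (i : ι) : {a : A | e i ≤ e a}.Nonempty := by
    obtain ⟨_, ⟨a, ha, rfl⟩, hlt⟩ := (hA.image he.injOn).exists_gt (e i)
    exact ⟨⟨a, ha⟩, hlt.le⟩
  let r (i : ι) : A := Function.argminOn (fun a : A => e a) _ (hne i)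
  have le_r (i : ι) : e i ≤ e (r i) := Function.argminOn_mem _ _ (hne i)
  refine ⟨r, fun a => Subtype.ext <| he <| le_antisymm ?_ (le_r a), fun a => ?_⟩
  · exact Function.argminOn_le (fun a : A => e a) _ (le_refl (e a))
  · refine Finite.of_injective (fun i => (⟨e i, ?_⟩ : Fin (e a + 1))) fun i j hij => ?_
    · exact Nat.lt_succ_of_le ((le_r i).trans_eq (congrArg (fun a : A => e a) i.2))
    · exact Subtype.ext (he (Fin.ext_iff.1 hij))

section CountableProduct

variable {ι : Type*} [Countable ι] (X : ι → Type*) [∀ i, TopologicalSpace (X i)]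
  [∀ i, DiscreteTopology (X i)] [∀ i, Nonempty (X i)]

theorem nonempty_pi_homeomorph_cantor [∀ i, Finite (X i)]
    (h : {i | Nontrivial (X i)}.Infinite) : Nonempty ((∀ i, X i) ≃ₜ (ℕ → Bool)) := by
  obtain ⟨r, hr, hfin⟩ := h.exists_retraction_finite_fiber
  have := h.to_subtype
  let σ : ℕ ≃ {i | Nontrivial (X i)} := nonempty_equiv_of_countable.some
  have (n : ℕ) : Nontrivial (∀ i : {i // r i = σ n}, X i) :=
    haveI : Nontrivial (X (σ n)) := (σ n).2
    Pi.nontrivial_at ⟨σ n, hr (σ n)⟩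
  obtain ⟨c⟩ := nonempty_homeomorph_pi_of_finite_nontrivial fun n => ∀ i : {i // r i = σ n}, X i
  exact ⟨(piHomeomorphPiFiber r X).trans ((Homeomorph.piCongrLeft σ).symm.trans c.symm)⟩

theorem nonempty_pi_homeomorph_baire [∀ i, Countable (X i)]
    (h : {i | Infinite (X i)}.Infinite) : Nonempty ((∀ i, X i) ≃ₜ (ℕ → ℕ)) := by
  obtain ⟨r, hr, hfin⟩ := h.exists_retraction_finite_fiber
  have := h.to_subtype
  have hblock (a : {i | Infinite (X i)}) : (∀ i : {i // r i = a}, X i) ≃ₜ ℕ :=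
    haveI : Infinite (X a) := a.2
    haveI := Pi.infinite_of_exists_right (π := fun i : {i // r i = a} => X i) ⟨a, hr a⟩
    nonempty_equiv_of_countable.some.toHomeomorphOfDiscrete
  exact ⟨(piHomeomorphPiFiber r X).trans ((Homeomorph.piCongrRight hblock).trans
    (Homeomorph.piCongrLeft (Y := fun _ => ℕ) nonempty_equiv_of_countable.some))⟩

theorem hasStandardModel_pi [∀ i, Countable (X i)] : HasStandardModel (∀ i, X i) := by
  classical
  by_cases hinf : {i | Infinite (X i)}.Infinite
  · exact .inr <| .inr <| .inr <| .inr (nonempty_pi_homeomorph_baire X hinf)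
  rw [Set.not_infinite] at hinf
  have : Finite {i // Infinite (X i)} := hinf.to_subtype
  by_cases hnt : {i | Nontrivial (X i)}.Infinite
  · have (i : {i // ¬Infinite (X i)}) : Finite (X i) := not_infinite_iff_finite.1 i.2
    have hnt' : {i : {i // ¬Infinite (X i)} | Nontrivial (X i)}.Infinite :=
      .of_image Subtype.val <| (hnt.sdiff hinf).mono fun i hi => ⟨⟨i, hi.2⟩, hi.1, rfl⟩
    obtain ⟨c⟩ := nonempty_pi_homeomorph_cantor (fun i : {i // ¬Infinite (X i)} => X i) hnt'
    let split := Homeomorph.piEquivPiSubtypeProd (fun i => Infinite (X i)) X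
    rcases isEmpty_or_nonempty {i // Infinite (X i)} with _ | ⟨⟨i⟩⟩
    · exact .inr <| .inr <| .inl ⟨split.trans ((Homeomorph.uniqueProd _ _).trans c)⟩
    · have : Infinite (X i) := i.2
      have := Pi.infinite_of_exists_right (π := fun i : {i // Infinite (X i)} => X i) i
      exact .inr <| .inr <| .inr <| .inl
        ⟨split.trans (nonempty_equiv_of_countable.some.toHomeomorphOfDiscrete.prodCongr c)⟩
  · have : Finite {i // Nontrivial (X i)} := (Set.not_infinite.1 hnt).to_subtype
    let (i : {i // ¬Nontrivial (X i)}) : Unique (X i) :=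
      have := not_nontrivial_iff_subsingleton.1 i.2
      uniqueOfSubsingleton (Classical.arbitrary _)
    exact (hasStandardModel_of_discrete _).of_homeomorph
      ((Homeomorph.piEquivPiSubtypeProd (fun i => Nontrivial (X i)) X).trans
        (Homeomorph.prodUnique _ _))

end CountableProduct

theorem exists_monotone_cofinal_seq {Λ : Type*} [Preorder Λ] [IsDirected Λ (· ≤ ·)] [Nonempty Λ]
    {I : Set Λ} (hI : I.Countable) (hcof : ∀ α, ∃ β ∈ I, α ≤ β) :
    ∃ a : ℕ → Λ, Monotone a ∧ ∀ α, ∃ n, α ≤ a n := by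
  have hdir : Directed (· ≤ ·) (Subtype.val : I → Λ) := fun i j => by
    obtain ⟨γ, hiγ, hjγ⟩ := directed_of (· ≤ ·) i.1 j.1
    obtain ⟨β, hβ, hγβ⟩ := hcof γ
    exact ⟨⟨β, hβ⟩, hiγ.trans hγβ, hjγ.trans hγβ⟩
  have := hI.toEncodable
  obtain ⟨β₀, hβ₀, -⟩ := hcof (Classical.arbitrary Λ)
  have : Inhabited I := ⟨⟨β₀, hβ₀⟩⟩
  refine ⟨Subtype.val ∘ hdir.sequence _, hdir.sequence_mono, fun α => ?_⟩
  obtain ⟨β, hβ, hαβ⟩ := hcof α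
  exact ⟨_, hαβ.trans (hdir.le_sequence ⟨β, hβ⟩)⟩

namespace invLimSys

variable {Λ : Type*} [Preorder Λ] (G : Λ → Type*) [∀ α, AddCommGroup (G α)]
  (f : ∀ ⦃α β : Λ⦄, α ≤ β → (G β →+ G α))

def proj (α : Λ) : invLimSys G f →+ G α :=
  (Pi.evalAddMonoidHom G α).comp (invLimSys G f).subtype

@[simp]
lemma proj_apply (α : Λ) (x : invLimSys G f) : proj G f α x = (x : ∀ α, G α) α := rfl

variable {G f}

lemma proj_eq_zero_of_le {x : invLimSys G f} {α β : Λ} (h : α ≤ β) (hx : proj G f β x = 0) :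
    proj G f α x = 0 := by
  rw [proj_apply] at hx ⊢
  rw [x.2 h, hx, map_zero]

variable (G f) (a : ℕ → Λ)

def filtration : ℕ → AddSubgroup (invLimSys G f)
  | 0 => ⊤
  | n + 1 => (proj G f (a n)).ker

/-- A copy of the quotient `filtration G f a n ⧸ filtration G f a (n + 1)`. -/
def layer (n : ℕ) : AddSubgroup (G (a n)) := (filtration G f a n).map (proj G f (a n))

variable {G f}

noncomputable def lift (n : ℕ) (g : layer G f a n) : invLimSys G f :=
  (AddSubgroup.mem_map.1 g.2).choose

lemma lift_mem (n : ℕ) (g : layer G f a n) : lift a n g ∈ filtration G f a n :=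
  (AddSubgroup.mem_map.1 g.2).choose_spec.1

lemma proj_lift (n : ℕ) (g : layer G f a n) : proj G f (a n) (lift a n g) = g :=
  (AddSubgroup.mem_map.1 g.2).choose_spec.2

def digit (n : ℕ) (r : filtration G f a n) : layer G f a n :=
  ⟨proj G f (a n) r, AddSubgroup.mem_map_of_mem _ r.2⟩

noncomputable def peel (n : ℕ) (r : filtration G f a n) : filtration G f a (n + 1) :=
  ⟨r - lift a n (digit a n r), by
    show proj G f (a n) _ = 0
    rw [map_sub, proj_lift, digit, sub_self]⟩

noncomputable def remainder (x : invLimSys G f) : (n : ℕ) → filtration G f a n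
  | 0 => ⟨x, AddSubgroup.mem_top x⟩
  | n + 1 => peel a n (remainder x n)

noncomputable def digits (x : invLimSys G f) (n : ℕ) : layer G f a n :=
  digit a n (remainder a x n)

noncomputable def partialSum (p : ∀ n, layer G f a n) (N : ℕ) : invLimSys G f :=
  ∑ j ∈ Finset.range N, lift a j (p j)

lemma partialSum_digits_add_remainder (x : invLimSys G f) (n : ℕ) :
    partialSum a (digits a x) n + remainder a x n = x := by
  induction n with
  | zero => simp [partialSum, remainder]
  | succ n ih =>
    conv_rhs => rw [← ih]
    rw [partialSum, partialSum, Finset.sum_range_succ]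
    change _ + ((remainder a x n : invLimSys G f) - lift a n (digits a x n)) = _
    abel

variable {a}

lemma proj_eq_zero_of_mem_filtration (ha : Monotone a) {m n : ℕ} (hmn : m < n) {α : Λ}
    (hα : α ≤ a m) {z : invLimSys G f} (hz : z ∈ filtration G f a n) : proj G f α z = 0 := by
  obtain ⟨k, rfl⟩ := Nat.exists_eq_add_of_lt hmn
  exact proj_eq_zero_of_le (hα.trans (ha (Nat.le_add_right m k))) hz

lemma partialSum_apply_eq (ha : Monotone a) (p : ∀ n, layer G f a n) {α : Λ} {N M : ℕ}
    (hα : α ≤ a N) (hNM : N < M) :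
    proj G f α (partialSum a p M) = proj G f α (partialSum a p (N + 1)) := by
  induction M, hNM using Nat.le_induction with
  | base => rfl
  | succ M hNM ih =>
    rw [partialSum, Finset.sum_range_succ, map_add, ← partialSum, ih,
      proj_eq_zero_of_mem_filtration ha hNM hα (lift_mem a M (p M)), add_zero]

variable (a) in
/-- The value at `α ≤ a N` is read off the `(N + 1)`-st partial sum: the later summands vanish
at `α`. -/
noncomputable def glue (ha : Monotone a) (hcof : ∀ α, ∃ n, α ≤ a n) (p : ∀ n, layer G f a n) :
    invLimSys G f :=
  ⟨fun α => proj G f α (partialSum a p ((hcof α).choose + 1)), fun α β h => by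
    dsimp only
    have hM := partialSum_apply_eq ha p (hcof α).choose_spec
      (Nat.lt_succ_of_le (le_max_left _ (hcof β).choose))
    rw [← hM, ← partialSum_apply_eq ha p (hcof β).choose_spec
      (Nat.lt_succ_of_le (le_max_right (hcof α).choose _))]
    exact (partialSum a p _).2 h⟩

lemma proj_glue (ha : Monotone a) (hcof : ∀ α, ∃ n, α ≤ a n) (p : ∀ n, layer G f a n)
    {α : Λ} {N : ℕ} (hα : α ≤ a N) :
    proj G f α (glue a ha hcof p) = proj G f α (partialSum a p (N + 1)) := by
  change proj G f α (partialSum a p ((hcof α).choose + 1)) = _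
  rw [← partialSum_apply_eq ha p (hcof α).choose_spec
      (Nat.lt_succ_of_le (le_max_left _ N)),
    partialSum_apply_eq ha p hα (Nat.lt_succ_of_le (le_max_right _ _))]

lemma glue_digits (ha : Monotone a) (hcof : ∀ α, ∃ n, α ≤ a n) (x : invLimSys G f) :
    glue a ha hcof (digits a x) = x := by
  refine Subtype.ext <| funext fun α => ?_
  obtain ⟨N, hα⟩ := hcof α
  change proj G f α (glue a ha hcof (digits a x)) = proj G f α x
  conv_rhs => rw [← partialSum_digits_add_remainder a x (N + 1)]
  rw [proj_glue ha hcof _ hα, map_add,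
    proj_eq_zero_of_mem_filtration ha N.lt_succ_self hα (remainder a x (N + 1)).2, add_zero]

lemma digits_glue (ha : Monotone a) (hcof : ∀ α, ∃ n, α ≤ a n) (p : ∀ n, layer G f a n) :
    digits a (glue a ha hcof p) = p := by
  set x := glue a ha hcof p
  have hdigit (n : ℕ) (hn : partialSum a (digits a x) n = partialSum a p n) :
      digits a x n = p n := by
    have hrem : (remainder a x n : invLimSys G f) = x - partialSum a p n := by
      rw [← hn, eq_sub_iff_add_eq', partialSum_digits_add_remainder]
    refine Subtype.ext ?_
    change proj G f (a n) (remainder a x n) = p n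
    rw [hrem, map_sub, proj_glue ha hcof p le_rfl, partialSum, Finset.sum_range_succ, map_add,
      ← partialSum, add_sub_cancel_left, proj_lift]
  have hsum (n : ℕ) : partialSum a (digits a x) n = partialSum a p n := by
    induction n with
    | zero => rfl
    | succ n ih =>
      rw [partialSum, partialSum, Finset.sum_range_succ, Finset.sum_range_succ, ← partialSum,
        ← partialSum, ih, hdigit n ih]
  exact funext fun n => hdigit n (hsum n)

section Topology

variable [∀ α, TopologicalSpace (G α)]

lemma continuous_proj (α : Λ) : Continuous (proj G f α) :=
  (continuous_apply α).comp continuous_subtype_val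

variable [∀ α, DiscreteTopology (G α)]

lemma continuous_remainder (n : ℕ) :
    Continuous fun x : invLimSys G f => (remainder a x n : invLimSys G f) := by
  induction n with
  | zero => exact continuous_id
  | succ n ih =>
    have hdigit : Continuous fun x => digits a x n := ((continuous_proj _).comp ih).subtype_mk _
    exact ih.sub ((continuous_of_discreteTopology (f := lift a n)).comp hdigit)

lemma continuous_digits : Continuous (digits a : invLimSys G f → ∀ n, layer G f a n) :=
  continuous_pi fun n => ((continuous_proj _).comp (continuous_remainder n)).subtype_mk _

lemma continuous_partialSum (N : ℕ) :
    Continuous fun p : ∀ n, layer G f a n => partialSum a p N :=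
  continuous_finsetSum _ fun j _ =>
    (continuous_of_discreteTopology (f := lift a j)).comp (continuous_apply j)

lemma continuous_glue (ha : Monotone a) (hcof : ∀ α, ∃ n, α ≤ a n) :
    Continuous (glue (G := G) (f := f) a ha hcof) :=
  (continuous_pi fun α => (continuous_proj α).comp (continuous_partialSum _)).subtype_mk _

noncomputable def homeomorphPiLayer (ha : Monotone a) (hcof : ∀ α, ∃ n, α ≤ a n) :
    invLimSys G f ≃ₜ ∀ n, layer G f a n where
  toFun := digits a
  invFun := glue a ha hcof
  left_inv := glue_digits ha hcof
  right_inv := digits_glue ha hcof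
  continuous_toFun := continuous_digits
  continuous_invFun := continuous_glue ha hcof

end Topology

end invLimSys

theorem invLimSys_homeomorphism_classification_general
    {Λ : Type*} [Preorder Λ] [IsDirected Λ (· ≤ ·)]
    (G : Λ → Type*) [∀ α, AddCommGroup (G α)] [∀ α, Countable (G α)]
    [∀ α, TopologicalSpace (G α)] [∀ α, DiscreteTopology (G α)]
    (f : ∀ ⦃α β : Λ⦄, α ≤ β → (G β →+ G α))
    (hcof : ∃ I : Set Λ, I.Countable ∧ ∀ α : Λ, ∃ β ∈ I, α ≤ β) :
    (∃ (F : Type) (_ : TopologicalSpace F) (_ : DiscreteTopology F),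
        Finite F ∧ Nonempty (invLimSys G f ≃ₜ F)) ∨
    Nonempty (invLimSys G f ≃ₜ ℕ) ∨
    Nonempty (invLimSys G f ≃ₜ (ℕ → Bool)) ∨
    Nonempty (invLimSys G f ≃ₜ ℕ × (ℕ → Bool)) ∨
    Nonempty (invLimSys G f ≃ₜ (ℕ → ℕ)) := by
  obtain ⟨I, hI, hIcof⟩ := hcof
  rcases isEmpty_or_nonempty Λ with _ | _
  · have : Subsingleton (invLimSys G f) := ⟨fun x y => Subtype.ext (Subsingleton.elim _ _)⟩
    exact hasStandardModel_of_discrete _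
  · obtain ⟨a, ha, hacof⟩ := exists_monotone_cofinal_seq hI hIcof
    exact (hasStandardModel_pi _).of_homeomorph (invLimSys.homeomorphPiLayer ha hacof)

/-- Let `Λ` be a directed set admitting a countable cofinal subset and let
`(G_α, f_{αβ})` be an inverse system of countable discrete abelian groups over `Λ`. Then the
inverse limit `lim G_α`, with the subspace topology from the product of the discrete topologies,
is homeomorphic to one of the following five spaces: a finite discrete space; `ℕ` with the
discrete topology; the Cantor space `ℕ → Bool`; the product `ℕ × (ℕ → Bool)` of the discrete
space `ℕ` with the Cantor space; or the Baire space `ℕ → ℕ`. -/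
theorem invLimSys_homeomorphism_classification
    {Λ : Type*} [Preorder Λ] [IsDirected Λ (· ≤ ·)]
    (G : Λ → Type*) [∀ α, AddCommGroup (G α)] [∀ α, Countable (G α)]
    [∀ α, TopologicalSpace (G α)] [∀ α, DiscreteTopology (G α)]
    (f : ∀ ⦃α β : Λ⦄, α ≤ β → (G β →+ G α))
    (hid : ∀ α, f (le_refl α) = AddMonoidHom.id (G α))
    (hcomp : ∀ ⦃α β γ : Λ⦄ (h₁ : α ≤ β) (h₂ : β ≤ γ), (f h₁).comp (f h₂) = f (h₁.trans h₂))
    (hcof : ∃ I : Set Λ, I.Countable ∧ ∀ α : Λ, ∃ β ∈ I, α ≤ β) :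
    (∃ (F : Type) (_ : TopologicalSpace F) (_ : DiscreteTopology F),
        Finite F ∧ Nonempty (invLimSys G f ≃ₜ F)) ∨
    Nonempty (invLimSys G f ≃ₜ ℕ) ∨
    Nonempty (invLimSys G f ≃ₜ (ℕ → Bool)) ∨
    Nonempty (invLimSys G f ≃ₜ ℕ × (ℕ → Bool)) ∨
    Nonempty (invLimSys G f ≃ₜ (ℕ → ℕ)) :=
  invLimSys_homeomorphism_classification_general G f hcof
end
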